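/- Let t₁ be an indexed red-black tree of black height n₁, a a key, and t₂ an indexed red-black tree of black height n₂, with n₁ > n₂. If the root color of t₁ is black, then the cost of JoinRight(t₁, a, t₂) (the number of recursive calls it performs) is at most 2(n₁ − n₂); if the root color of t₁ is red, then the cost is at most 1 + 2(n₁ − n₂). -/
import Mathlib


/-- Node colors for red-black trees. -/
inductive Color where
  | red : Color
  | black : Color
deriving DecidableEq

/-- Plain binary trees with colored nodes. -/
inductive RBTree (α : Type) where
  | leaf : RBTree α
  | node : Color → RBTree α → α → RBTree α → RBTree α

namespace RBTree

variable {α : Type}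

/-- The black height of a tree (computed along the left spine). -/
def blackHeight : RBTree α → ℕ
  | leaf => 0
  | node Color.red l _ _ => blackHeight l
  | node Color.black l _ _ => blackHeight l + 1

/-- The color of the root; leaves count as black. -/
def rootColor : RBTree α → Color
  | leaf => Color.black
  | node c _ _ _ => c

/-- In-order traversal. -/
def inorder : RBTree α → List α
  | leaf => []
  | node _ l a r => inorder l ++ a :: inorder r

/-- Number of internal (key-carrying) nodes. -/
def size : RBTree α → ℕ
  | leaf => 0
  | node _ l _ r => size l + 1 + size r

/-- `IsRBT t y n` means `t` is a valid red-black tree with root color `y`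
and black height `n`, mirroring the indexed inductive family `irbt`. -/
inductive IsRBT : RBTree α → Color → ℕ → Prop where
  | leaf : IsRBT leaf Color.black 0
  | red {t₁ t₂ : RBTree α} {n : ℕ} (a : α) :
      IsRBT t₁ Color.black n → IsRBT t₂ Color.black n →
      IsRBT (node Color.red t₁ a t₂) Color.red n
  | black {t₁ t₂ : RBTree α} {y₁ y₂ : Color} {n : ℕ} (a : α) :
      IsRBT t₁ y₁ n → IsRBT t₂ y₂ n →
      IsRBT (node Color.black t₁ a t₂) Color.black (n + 1)

end RBTree
namespace RBTree

variable {α : Type}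

/-- The cost of `JoinRight`: the number of recursive invocations of
`JoinRight` performed (each recursive call incurs unit cost; the
non-recursive rebalancing cases incur zero cost). -/
def joinRightCost : RBTree α → α → RBTree α → ℕ
  | leaf, _, _ => 0
  | node Color.red _ _ t₁₂, a, t₂ => 1 + joinRightCost t₁₂ a t₂
  | node Color.black t₁₁ a₁ t₁₂, a, t₂ =>
      if blackHeight (node Color.black t₁₁ a₁ t₁₂) = blackHeight t₂ + 1 then 0
      else 1 + joinRightCost t₁₂ a t₂

/-- The cost of `JoinLeft`, symmetrically. -/
def joinLeftCost : RBTree α → α → RBTree α → ℕ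
  | _, _, leaf => 0
  | t₁, a, node Color.red t₂₁ _ _ => 1 + joinLeftCost t₁ a t₂₁
  | t₁, a, node Color.black t₂₁ a₂ t₂₂ =>
      if blackHeight (node Color.black t₂₁ a₂ t₂₂) = blackHeight t₁ + 1 then 0
      else 1 + joinLeftCost t₁ a t₂₁

/-- The cost of `Join`: the number of recursive invocations of
`JoinRight`/`JoinLeft` performed (the equal-height case and the final
recoloring incur zero cost). -/
def joinCost (t₁ : RBTree α) (a : α) (t₂ : RBTree α) : ℕ :=
  if blackHeight t₂ < blackHeight t₁ then joinRightCost t₁ a t₂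
  else if blackHeight t₁ < blackHeight t₂ then joinLeftCost t₁ a t₂
  else 0

end RBTree
lemma RBTree.IsRBT.blackHeight_eq {α : Type} {t : RBTree α} {y : Color} {n : ℕ}
    (h : RBTree.IsRBT t y n) : RBTree.blackHeight t = n := by
  induction h with
  | leaf => rfl
  | red _ h1 h2 ih1 ih2 => simpa [RBTree.blackHeight] using ih1
  | black _ h1 h2 ih1 ih2 => simpa [RBTree.blackHeight] using ih1

/-- **Strengthened cost of JoinRight, by root color.**  Let `t₁` be a
red-black tree of black height `n₁` with root color `y₁`, `a` a key, and
`t₂` a red-black tree of black height `n₂`, with `n₁ > n₂`.  If `y₁` is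
black, then the cost of `JoinRight(t₁, a, t₂)` (the number of recursive
calls it performs) is at most `2 * (n₁ - n₂)`; if `y₁` is red, then the cost
is at most `1 + 2 * (n₁ - n₂)`. -/
theorem joinRight_cost_bound_by_color {α : Type} {y₁ y₂ : Color} {n₁ n₂ : ℕ}
    (t₁ : RBTree α) (a : α) (t₂ : RBTree α)
    (h₁ : RBTree.IsRBT t₁ y₁ n₁) (h₂ : RBTree.IsRBT t₂ y₂ n₂)
    (hn : n₁ > n₂) :
    (y₁ = Color.black → RBTree.joinRightCost t₁ a t₂ ≤ 2 * (n₁ - n₂)) ∧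
    (y₁ = Color.red → RBTree.joinRightCost t₁ a t₂ ≤ 1 + 2 * (n₁ - n₂)) := by
  revert hn
  induction h₁ with
  | leaf => intro hn; omega
  | red a' hl hr ihl ihr =>
    intro hn
    refine ⟨fun h => by simp at h, fun _ => ?_⟩
    simp only [RBTree.joinRightCost]
    have := (ihr hn).1 rfl
    omega
  | @black l r yl yr n a' hl hr ihl ihr =>
    intro hn
    refine ⟨fun _ => ?_, fun h => by simp at h⟩
    simp only [RBTree.joinRightCost]
    have hbh : RBTree.blackHeight (RBTree.node Color.black l a' r) = n + 1 := by
      simp [RBTree.blackHeight, hl.blackHeight_eq]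
    have hbh2 : RBTree.blackHeight t₂ = n₂ := h₂.blackHeight_eq
    rw [hbh, hbh2]
    by_cases hc : n + 1 = n₂ + 1
    · simp [hc]
    · rw [if_neg hc]
      have hn' : n > n₂ := by omega
      have h1 := (ihr hn').1
      have h2 := (ihr hn').2
      cases yr with
      | red => have := h2 rfl; omega
      | black => have := h1 rfl; omega
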